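/- Every point c ∈ 𝒩 \ 𝒞 violates exactly one of the eight CHSH inequalities: there is exactly one sign vector s ∈ {−1,1}⁴ with s₁₁s₁₂s₂₁s₂₂ = −1 such that s₁₁c₁₁ + s₁₂c₁₂ + s₂₁c₂₁ + s₂₂c₂₂ > 2. -/

import Mathlib

/-!
The even sign vectors are exactly `±h₀, …, ±h₃`, where the `hₖ` are the rows of the `4 × 4`
Hadamard matrix. Since the rows are orthogonal of squared length `4`, `c = ∑ₖ (⟨hₖ, c⟩ / 4) • hₖ`,
so `𝒞` is the cross-polytope `∑ₖ |⟨hₖ, c⟩| ≤ 4`; its sixteen facets are the eight faces of the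
cube and the eight CHSH inequalities. Hence a point of the cube outside `𝒞` violates some CHSH
inequality. Two distinct odd sign vectors `s ≠ t` differ in at least two coordinates, where
`s + t` vanishes, so `(s + t) · c ≤ 4` on the cube and at most one of them can exceed `2`.
-/

/-- The classical polytope: convex hull of the eight even sign vectors. -/
def Cpoly : Set (Fin 4 → ℝ) :=
  convexHull ℝ {e : Fin 4 → ℝ | (∀ i, e i = 1 ∨ e i = -1) ∧ e 0 * e 1 * e 2 * e 3 = 1}

/-- The no-signalling body: the cube `[-1,1]⁴`. -/
def Ncube : Set (Fin 4 → ℝ) := {c | ∀ i, c i ∈ Set.Icc (-1 : ℝ) 1}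

theorem AbsConvex.sum_smul_mem {E ι : Type*} [AddCommGroup E] [Module ℝ E] [Fintype ι]
    [Nonempty ι] {t : Set E} (ht : AbsConvex ℝ t) {v : ι → E} (hv : ∀ i, v i ∈ t)
    {a : ι → ℝ} (ha : ∑ i, |a i| ≤ 1) : ∑ i, a i • v i ∈ t := by
  classical
  let w : Option ι → ℝ := fun o => o.elim (1 - ∑ i, |a i|) fun i => |a i|
  let z : Option ι → E := fun o => o.elim 0 fun i => if 0 ≤ a i then v i else -v i
  have hz : ∀ o, z o ∈ t := by
    rintro (_ | i)
    · exact ht.1.zero_mem ⟨_, hv (Classical.arbitrary ι)⟩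
    · dsimp only [z, Option.elim]
      split_ifs
      exacts [hv i, ht.1.neg_mem_iff.2 (hv i)]
  have hw : ∀ o, 0 ≤ w o := by
    rintro (_ | i)
    exacts [sub_nonneg.2 ha, abs_nonneg _]
  have hwz : ∑ o, w o • z o = ∑ i, a i • v i := by
    rw [Fintype.sum_option]
    simp only [w, z, Option.elim, smul_zero, zero_add]
    refine Finset.sum_congr rfl fun i _ => ?_
    split_ifs with hai
    · rw [abs_of_nonneg hai]
    · rw [abs_of_neg (not_le.1 hai), smul_neg, neg_smul, neg_neg]
  rw [← hwz]
  exact ht.2.sum_mem (fun o _ => hw o) (by simp [w, Fintype.sum_option]) fun o _ => hz o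

theorem exists_pair_eq_neg_of_prod_eq {ι : Type*} [Fintype ι] {s t : ι → ℝ}
    (hs : ∀ i, s i = 1 ∨ s i = -1) (ht : ∀ i, t i = 1 ∨ t i = -1)
    (hst : ∏ i, s i = ∏ i, t i) (hne : s ≠ t) :
    ∃ j k, j ≠ k ∧ t j = -s j ∧ t k = -s k := by
  classical
  have hflip : ∀ i, s i ≠ t i → t i = -s i := fun i hi => by
    rcases hs i with h | h <;> rcases ht i with h' | h' <;> simp_all
  obtain ⟨j, hj⟩ := Function.ne_iff.1 hne
  by_contra! hk
  have hagree : ∀ k ∈ Finset.univ.erase j, s k = t k := fun k hk' => by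
    by_contra h
    exact hk j k (Finset.ne_of_mem_erase hk').symm (hflip j hj) (hflip k h)
  have hs0 : ∏ i, s i ≠ 0 := Finset.prod_ne_zero_iff.2 fun i _ => by
    rcases hs i with h | h <;> norm_num [h]
  have : ∏ i, t i = -∏ i, s i := by
    rw [← Finset.mul_prod_erase _ _ (Finset.mem_univ j), ← Finset.mul_prod_erase _ s
      (Finset.mem_univ j), Finset.prod_congr rfl hagree, hflip j hj, neg_mul]
  rw [← hst] at this
  exact hs0 (by linarith)

theorem sum_mul_add_sum_mul_le_of_prod_eq {ι : Type*} [Fintype ι] {s t c : ι → ℝ}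
    (hs : ∀ i, s i = 1 ∨ s i = -1) (ht : ∀ i, t i = 1 ∨ t i = -1)
    (hst : ∏ i, s i = ∏ i, t i) (hne : s ≠ t) (hc : ∀ i, c i ∈ Set.Icc (-1 : ℝ) 1) :
    ∑ i, s i * c i + ∑ i, t i * c i ≤ 2 * (Fintype.card ι - 2) := by
  classical
  obtain ⟨j, k, hjk, hj, hk⟩ := exists_pair_eq_neg_of_prod_eq hs ht hst hne
  have hkj : k ∈ Finset.univ.erase j := Finset.mem_erase.2 ⟨hjk.symm, Finset.mem_univ k⟩
  have hterm : ∀ i, (s i + t i) * c i ≤ 2 := fun i => by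
    obtain ⟨hc₁, hc₂⟩ := hc i
    rcases hs i with h | h <;> rcases ht i with h' | h' <;> rw [h, h'] <;> linarith
  calc ∑ i, s i * c i + ∑ i, t i * c i
      = ∑ i ∈ (Finset.univ.erase j).erase k, (s i + t i) * c i := by
        rw [Finset.sum_erase _ (by rw [hk]; ring), Finset.sum_erase _ (by rw [hj]; ring),
          ← Finset.sum_add_distrib]
        simp only [add_mul]
    _ ≤ ∑ _i ∈ (Finset.univ.erase j).erase k, (2 : ℝ) := Finset.sum_le_sum fun i _ => hterm i
    _ = 2 * (Fintype.card ι - 2) := by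
        have hcard := Finset.card_erase_add_one (Finset.mem_univ j)
        rw [← Finset.card_erase_add_one hkj, Finset.card_univ] at hcard
        rw [Finset.sum_const, nsmul_eq_mul, ← hcard]
        push_cast
        ring

def chshSigns : Set (Fin 4 → ℝ) :=
  {s | (∀ i, s i = 1 ∨ s i = -1) ∧ s 0 * s 1 * s 2 * s 3 = -1}

def hadamardRows : Fin 4 → Fin 4 → ℝ :=
  ![![1, 1, 1, 1], ![1, 1, -1, -1], ![1, -1, 1, -1], ![1, -1, -1, 1]]

theorem eq_sum_hadamardRows (c : Fin 4 → ℝ) :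
    c = ∑ k, ((∑ i, hadamardRows k i * c i) / 4) • hadamardRows k := by
  funext i
  fin_cases i <;>
    simp only [hadamardRows, Fin.sum_univ_four, Finset.sum_apply, Pi.smul_apply, smul_eq_mul,
      Matrix.cons_val, Matrix.cons_val_zero, Matrix.cons_val_one, Fin.zero_eta, Fin.mk_one,
      Fin.reduceFinMk, Fin.isValue] <;>
    ring

theorem range_hadamardRows_union_neg_subset :
    Set.range hadamardRows ∪ -Set.range hadamardRows ⊆
      {e : Fin 4 → ℝ | (∀ i, e i = 1 ∨ e i = -1) ∧ e 0 * e 1 * e 2 * e 3 = 1} := by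
  rintro e (⟨k, rfl⟩ | ⟨k, hk⟩)
  · fin_cases k <;> simp [hadamardRows, Fin.forall_fin_succ]
  · obtain rfl : e = -hadamardRows k := by rw [hk, neg_neg]
    fin_cases k <;> simp [hadamardRows, Fin.forall_fin_succ]

theorem sum_abs_hadamardRows_le {c : Fin 4 → ℝ} (hc : c ∈ Ncube)
    (hchsh : ∀ s ∈ chshSigns, ∑ i, s i * c i ≤ 2) :
    ∑ k, |∑ i, hadamardRows k i * c i| ≤ 4 := by
  have chsh : ∀ a b d e : ℝ, ![a, b, d, e] ∈ chshSigns →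
      a * c 0 + b * c 1 + d * c 2 + e * c 3 ≤ 2 := fun a b d e h => by
    simpa [Fin.sum_univ_four] using hchsh _ h
  have h₁ := chsh 1 1 1 (-1) (by simp [chshSigns, Fin.forall_fin_succ])
  have h₂ := chsh 1 1 (-1) 1 (by simp [chshSigns, Fin.forall_fin_succ])
  have h₃ := chsh 1 (-1) 1 1 (by simp [chshSigns, Fin.forall_fin_succ])
  have h₄ := chsh (-1) 1 1 1 (by simp [chshSigns, Fin.forall_fin_succ])
  have h₅ := chsh (-1) (-1) (-1) 1 (by simp [chshSigns, Fin.forall_fin_succ])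
  have h₆ := chsh (-1) (-1) 1 (-1) (by simp [chshSigns, Fin.forall_fin_succ])
  have h₇ := chsh (-1) 1 (-1) (-1) (by simp [chshSigns, Fin.forall_fin_succ])
  have h₈ := chsh 1 (-1) (-1) (-1) (by simp [chshSigns, Fin.forall_fin_succ])
  obtain ⟨c₀, c₀'⟩ := hc 0
  obtain ⟨c₁, c₁'⟩ := hc 1
  obtain ⟨c₂, c₂'⟩ := hc 2
  obtain ⟨c₃, c₃'⟩ := hc 3
  simp only [hadamardRows, Fin.sum_univ_four, Matrix.cons_val, Matrix.cons_val_zero,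
    Matrix.cons_val_one, Fin.isValue, one_mul, neg_mul, ← sub_eq_add_neg]
  rcases abs_cases (c 0 + c 1 + c 2 + c 3) with ⟨u₀, _⟩ | ⟨u₀, _⟩ <;>
  rcases abs_cases (c 0 + c 1 - c 2 - c 3) with ⟨u₁, _⟩ | ⟨u₁, _⟩ <;>
  rcases abs_cases (c 0 - c 1 + c 2 - c 3) with ⟨u₂, _⟩ | ⟨u₂, _⟩ <;>
  rcases abs_cases (c 0 - c 1 - c 2 + c 3) with ⟨u₃, _⟩ | ⟨u₃, _⟩ <;>
  linarith

theorem mem_Cpoly_of_forall_chsh_le {c : Fin 4 → ℝ} (hc : c ∈ Ncube)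
    (hchsh : ∀ s ∈ chshSigns, ∑ i, s i * c i ≤ 2) : c ∈ Cpoly := by
  rw [eq_sum_hadamardRows c]
  refine convexHull_mono range_hadamardRows_union_neg_subset ?_
  rw [convexHull_union_neg_eq_absConvexHull]
  refine absConvex_absConvexHull.sum_smul_mem
    (fun k => subset_absConvexHull (Set.mem_range_self k)) ?_
  simp only [abs_div, abs_of_pos (four_pos : (0 : ℝ) < 4), ← Finset.sum_div]
  exact (div_le_one four_pos).2 (sum_abs_hadamardRows_le hc hchsh)

theorem stmt7 (c : Fin 4 → ℝ) (hc : c ∈ Ncube) (hnc : c ∉ Cpoly) :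
    ∃! s : Fin 4 → ℝ,
      ((∀ i, s i = 1 ∨ s i = -1) ∧ s 0 * s 1 * s 2 * s 3 = -1) ∧
        2 < ∑ i, s i * c i := by
  obtain ⟨s, hs, hsc⟩ : ∃ s ∈ chshSigns, 2 < ∑ i, s i * c i := by
    by_contra! h
    exact hnc (mem_Cpoly_of_forall_chsh_le hc h)
  refine ⟨s, ⟨hs, hsc⟩, fun t ⟨ht, htc⟩ => ?_⟩
  by_contra hts
  have hprod : ∏ i, t i = ∏ i, s i := by rw [Fin.prod_univ_four, Fin.prod_univ_four, ht.2, hs.2]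
  have hsum := sum_mul_add_sum_mul_le_of_prod_eq ht.1 hs.1 hprod hts hc
  norm_num at hsum
  linarith
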